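/- arXiv:1706.07082 — 3 statements merged into one kernel-verified Lean document; each statement's English description precedes it below -/
import Mathlib

section
/- Let S be a right zero semigroup and ω a weight on S. Then ℓ¹(S, ω) is biprojective: for any fixed t₀ ∈ S, the map ρ(f) = δ_{t₀} ⊗ f is a bounded ℓ¹(S,ω)-bimodule homomorphism from ℓ¹(S,ω) into the projective tensor product ℓ¹(S,ω) ⊗̂ ℓ¹(S,ω) satisfying π ∘ ρ = id, where π is the multiplication map. -/
open scoped TensorProduct
open Filter
open scoped Classical

/-- A weight on a semigroup: strictly positive and submultiplicative. -/
def IsWeight {S : Type*} [Mul S] (ω : S → ℝ) : Prop :=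
  (∀ s, 0 < ω s) ∧ ∀ s t, ω (s * t) ≤ ω s * ω t

/-- A characterization of the Beurling algebra `ℓ¹(S, ω)`: a Banach algebra `A`
together with point masses `delta` and coefficient functionals such that every
element is the ℓ¹-sum of its coefficients against the point masses, with the
weighted ℓ¹-norm, and `delta` is multiplicative (`δ_s * δ_t = δ_{st}`). -/
structure BeurlingStructure (S : Type*) [Mul S] (ω : S → ℝ) (A : Type*)
    [NormedRing A] [NormedAlgebra ℂ A] where
  delta : S → A
  coeff : A →ₗ[ℂ] (S → ℂ)
  delta_mul : ∀ s t : S, delta s * delta t = delta (s * t)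
  coeff_delta : ∀ s t : S, coeff (delta s) t = if t = s then 1 else 0
  hasSum_coeff : ∀ a : A, HasSum (fun s => coeff a s • delta s) a
  norm_eq : ∀ a : A, ‖a‖ = ∑' s, ‖coeff a s‖ * ω s

/-- A pair of commuting continuous left/right module actions of a Banach algebra,
making `E` a Banach `A`-bimodule. -/
def IsBimodule {A : Type*} [NormedRing A] [NormedAlgebra ℂ A]
    {E : Type*} [NormedAddCommGroup E] [NormedSpace ℂ E]
    (l r : A →L[ℂ] E →L[ℂ] E) : Prop :=
  (∀ a b : A, l (a * b) = (l a).comp (l b)) ∧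
  (∀ a b : A, r (a * b) = (r b).comp (r a)) ∧
  (∀ a b : A, (l a).comp (r b) = (r b).comp (l a))

/-- Amenability of a Banach algebra: every bounded derivation into the dual of a
Banach bimodule is inner.  (The dual bimodule actions are `(a·f)(x) = f(x·a)` and
`(f·a)(x) = f(a·x)`.) -/
def IsAmenable (A : Type*) [NormedRing A] [NormedAlgebra ℂ A] : Prop :=
  ∀ (E : Type) [NormedAddCommGroup E] [NormedSpace ℂ E]
    (l r : A →L[ℂ] E →L[ℂ] E), IsBimodule l r →
    ∀ D : A →L[ℂ] (E →L[ℂ] ℂ),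
      (∀ a b : A, D (a * b) = (D b).comp (r a) + (D a).comp (l b)) →
      ∃ f : E →L[ℂ] ℂ, ∀ a : A, D a = f.comp (r a) - f.comp (l a)

/-- The projective tensor norm of an element of the algebraic tensor product. -/
noncomputable def projNorm (A B : Type*) [NormedAddCommGroup A] [NormedSpace ℂ A]
    [NormedAddCommGroup B] [NormedSpace ℂ B] (u : A ⊗[ℂ] B) : ℝ :=
  sInf {r : ℝ | ∃ (n : ℕ) (f : Fin n → A) (g : Fin n → B),
    u = ∑ i, f i ⊗ₜ[ℂ] g i ∧ r = ∑ i, ‖f i‖ * ‖g i‖}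

/-- Left action `a • (x ⊗ y) = (a*x) ⊗ y` on `A ⊗ A`. -/
noncomputable def tmulLeft {A : Type*} [NormedRing A] [NormedAlgebra ℂ A] (a : A) :
    A ⊗[ℂ] A →ₗ[ℂ] A ⊗[ℂ] A :=
  TensorProduct.map (LinearMap.mulLeft ℂ a) LinearMap.id

/-- Right action `(x ⊗ y) • a = x ⊗ (y*a)` on `A ⊗ A`. -/
noncomputable def tmulRight {A : Type*} [NormedRing A] [NormedAlgebra ℂ A] (a : A) :
    A ⊗[ℂ] A →ₗ[ℂ] A ⊗[ℂ] A :=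
  TensorProduct.map LinearMap.id (LinearMap.mulRight ℂ a)

/-- Pseudo-amenability: existence of an approximate diagonal.  (Since the algebraic
tensor product is dense in `A ⊗̂ A` in the projective norm, the approximate diagonal
may be taken in the algebraic tensor product, with the module-action conditions
measured in the projective tensor norm.) -/
def IsPseudoAmenable (A : Type*) [NormedRing A] [NormedAlgebra ℂ A] : Prop :=
  ∃ (ι : Type) (l : Filter ι), l.NeBot ∧ ∃ m : ι → A ⊗[ℂ] A,
    (∀ a : A, Tendsto (fun i => projNorm A A (tmulLeft a (m i) - tmulRight a (m i)))
        l (nhds 0)) ∧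
    (∀ a : A, Tendsto (fun i => a * LinearMap.mul' ℂ A (m i)) l (nhds a))

/-- A witness for biprojectivity of `A`: a realization `X` of the completed projective
tensor product `A ⊗̂ A` (with its bimodule actions and multiplication map `pihat`),
together with a bounded bimodule homomorphism `rho : A → A ⊗̂ A` with `π ∘ ρ = id`. -/
structure BiprojectiveWitness (A : Type*) [NormedRing A] [NormedAlgebra ℂ A] where
  X : Type
  [grp : NormedAddCommGroup X]
  [mod : NormedSpace ℂ X]
  [compl : CompleteSpace X]
  incl : A ⊗[ℂ] A →ₗ[ℂ] X
  dense_incl : DenseRange incl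
  norm_incl : ∀ u, ‖incl u‖ = projNorm A A u
  lact : A →L[ℂ] X →L[ℂ] X
  ract : A →L[ℂ] X →L[ℂ] X
  bimod : IsBimodule lact ract
  lact_incl : ∀ (a : A) u, lact a (incl u) = incl (tmulLeft a u)
  ract_incl : ∀ (a : A) u, ract a (incl u) = incl (tmulRight a u)
  pihat : X →L[ℂ] A
  pihat_incl : ∀ u, pihat (incl u) = LinearMap.mul' ℂ A u
  rho : A →L[ℂ] X
  rho_left : ∀ a b : A, rho (a * b) = lact a (rho b)
  rho_right : ∀ a b : A, rho (a * b) = ract b (rho a)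
  pihat_rho : ∀ a : A, pihat (rho a) = a

attribute [instance] BiprojectiveWitness.grp BiprojectiveWitness.mod
  BiprojectiveWitness.compl

/-- `A` is biprojective. -/
def IsBiprojective (A : Type*) [NormedRing A] [NormedAlgebra ℂ A] : Prop :=
  Nonempty (BiprojectiveWitness A)

/-- A witness for biflatness of `A`: a realization `X` of `A ⊗̂ A` together with a
bounded bimodule homomorphism `rho : A → (A ⊗̂ A)**` with `π** ∘ ρ = k_A`. -/
structure BiflatWitness (A : Type*) [NormedRing A] [NormedAlgebra ℂ A] where
  X : Type
  [grp : NormedAddCommGroup X]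
  [mod : NormedSpace ℂ X]
  [compl : CompleteSpace X]
  incl : A ⊗[ℂ] A →ₗ[ℂ] X
  dense_incl : DenseRange incl
  norm_incl : ∀ u, ‖incl u‖ = projNorm A A u
  lact : A →L[ℂ] X →L[ℂ] X
  ract : A →L[ℂ] X →L[ℂ] X
  bimod : IsBimodule lact ract
  lact_incl : ∀ (a : A) u, lact a (incl u) = incl (tmulLeft a u)
  ract_incl : ∀ (a : A) u, ract a (incl u) = incl (tmulRight a u)
  pihat : X →L[ℂ] A
  pihat_incl : ∀ u, pihat (incl u) = LinearMap.mul' ℂ A u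
  rho : A →L[ℂ] ((X →L[ℂ] ℂ) →L[ℂ] ℂ)
  rho_left : ∀ (a b : A) (f : X →L[ℂ] ℂ), rho (a * b) f = rho b (f.comp (lact a))
  rho_right : ∀ (a b : A) (f : X →L[ℂ] ℂ), rho (a * b) f = rho a (f.comp (ract b))
  pihat_rho : ∀ (a : A) (g : A →L[ℂ] ℂ), rho a (g.comp pihat) = g a

/-- `A` is biflat. -/
def IsBiflat (A : Type*) [NormedRing A] [NormedAlgebra ℂ A] : Prop :=
  Nonempty (BiflatWitness A)

/-- A realization of the completed projective tensor product `A ⊗̂ B` of two Banach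
spaces: a Banach space in which the algebraic tensor product sits densely and
isometrically for the projective tensor norm. -/
structure ProjTensorWitness (A B : Type*) [NormedAddCommGroup A] [NormedSpace ℂ A]
    [NormedAddCommGroup B] [NormedSpace ℂ B] where
  X : Type
  [grp : NormedAddCommGroup X]
  [mod : NormedSpace ℂ X]
  [compl : CompleteSpace X]
  incl : A ⊗[ℂ] B →ₗ[ℂ] X
  dense_incl : DenseRange incl
  norm_incl : ∀ u, ‖incl u‖ = projNorm A B u

attribute [instance] ProjTensorWitness.grp ProjTensorWitness.mod ProjTensorWitness.compl

/-- The principal ideal `S¹ s S¹` generated by `s`, inside the unitization `S¹`. -/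
def principalIdeal {S : Type*} [Semigroup S] (s : S) : Set (WithOne S) :=
  {x | ∃ u v : WithOne S, x = u * (s : WithOne S) * v}

/-- The Green-type relation `s τ t ↔ S¹sS¹ = S¹tS¹`. -/
def bandTau {S : Type*} [Semigroup S] (s t : S) : Prop :=
  principalIdeal s = principalIdeal t

/-- Amenability of a (topological) group: existence of a left-invariant mean on the
bounded continuous functions. -/
def GroupIsAmenable (G : Type*) [Group G] [TopologicalSpace G] [IsTopologicalGroup G] :
    Prop :=
  ∃ m : BoundedContinuousFunction G ℝ →L[ℝ] ℝ,
    m 1 = 1 ∧ (∀ f, 0 ≤ f → 0 ≤ m f) ∧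
    ∀ (g : G) (f : BoundedContinuousFunction G ℝ),
      m (f.compContinuous ⟨fun x => g * x, continuous_mul_left g⟩) = m f

/-- A characterization of the Beurling algebra `L¹(G, ω)` of a locally compact group
with Haar measure `μ`: a Banach algebra `A` whose elements are represented by
`ω`-integrable functions on `G`, with the weighted `L¹` norm and convolution product. -/
structure GroupBeurlingStructure (G : Type*) [Group G] [MeasurableSpace G]
    (μ : MeasureTheory.Measure G) (ω : G → ℝ) (A : Type*) [NormedRing A] [NormedAlgebra ℂ A] where
  toFun : A → G → ℂ
  integrable : ∀ a, MeasureTheory.Integrable (fun g => ‖toFun a g‖ * ω g) μ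
  map_add : ∀ a b : A, toFun (a + b) =ᶠ[MeasureTheory.ae μ] toFun a + toFun b
  map_smul : ∀ (c : ℂ) (a : A), toFun (c • a) =ᶠ[MeasureTheory.ae μ] c • toFun a
  eq_zero : ∀ a : A, toFun a =ᶠ[MeasureTheory.ae μ] 0 → a = 0
  norm_eq : ∀ a : A, ‖a‖ = ∫ g, ‖toFun a g‖ * ω g ∂μ
  map_mul : ∀ a b : A, toFun (a * b) =ᶠ[MeasureTheory.ae μ]
    fun x => ∫ t, toFun a t * toFun b (t⁻¹ * x) ∂μ
  surjective : ∀ f : G → ℂ, Measurable f →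
    MeasureTheory.Integrable (fun g => ‖f g‖ * ω g) μ → ∃ a, toFun a =ᶠ[MeasureTheory.ae μ] f

/-!
In a right zero semigroup `δ_s * δ_t = δ_t`, so by continuity every point mass is a left unit of
`ℓ¹(S, ω)`; with `d = δ_{t₀}` this gives `π (d ⊗ a) = d a = a`. The map `ρ a = d ⊗ a` is trivially a
right module map, and it is a left module map because `d ⊗ a b = a d ⊗ b`: both sides are continuous
in `a` and equal `d ⊗ b` at every point mass `a = δ_s`. The completed projective tensor product is
realized as the completion of `A ⊗ A` for the projective seminorm; the module actions and `π`
extend to it since they are bounded for that seminorm.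
-/

open scoped Pointwise

section ProjNorm

variable {E F E' F' : Type*} [NormedAddCommGroup E] [NormedSpace ℂ E]
  [NormedAddCommGroup F] [NormedSpace ℂ F] [NormedAddCommGroup E'] [NormedSpace ℂ E']
  [NormedAddCommGroup F'] [NormedSpace ℂ F']

def projNormSet (u : E ⊗[ℂ] F) : Set ℝ :=
  {r : ℝ | ∃ (n : ℕ) (f : Fin n → E) (g : Fin n → F),
    u = ∑ i, f i ⊗ₜ[ℂ] g i ∧ r = ∑ i, ‖f i‖ * ‖g i‖}

lemma projNorm_eq_sInf (u : E ⊗[ℂ] F) : projNorm E F u = sInf (projNormSet u) := rfl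

lemma projNormSet_nonempty (u : E ⊗[ℂ] F) : (projNormSet u).Nonempty := by
  obtain ⟨n, f, g, hu⟩ := TensorProduct.exists_sum_tmul_eq u
  exact ⟨_, n, f, g, hu, rfl⟩

lemma projNormSet_nonneg {u : E ⊗[ℂ] F} {r : ℝ} (hr : r ∈ projNormSet u) : 0 ≤ r := by
  obtain ⟨n, f, g, -, rfl⟩ := hr
  positivity

lemma projNormSet_bddBelow (u : E ⊗[ℂ] F) : BddBelow (projNormSet u) :=
  ⟨0, fun _ => projNormSet_nonneg⟩

lemma projNorm_nonneg (u : E ⊗[ℂ] F) : 0 ≤ projNorm E F u :=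
  le_csInf (projNormSet_nonempty u) fun _ => projNormSet_nonneg

lemma projNorm_le_of_mem {u : E ⊗[ℂ] F} {r : ℝ} (hr : r ∈ projNormSet u) :
    projNorm E F u ≤ r :=
  csInf_le (projNormSet_bddBelow u) hr

lemma projNorm_tmul_le (x : E) (y : F) : projNorm E F (x ⊗ₜ[ℂ] y) ≤ ‖x‖ * ‖y‖ :=
  projNorm_le_of_mem ⟨1, fun _ => x, fun _ => y, by simp, by simp⟩

lemma projNorm_zero : projNorm E F 0 = 0 :=
  le_antisymm (projNorm_le_of_mem ⟨0, Fin.elim0, Fin.elim0, by simp, by simp⟩)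
    (projNorm_nonneg 0)

lemma projNormSet_add_subset (u v : E ⊗[ℂ] F) :
    projNormSet u + projNormSet v ⊆ projNormSet (u + v) := by
  rintro _ ⟨_, ⟨m, f₁, g₁, rfl, rfl⟩, _, ⟨n, f₂, g₂, rfl, rfl⟩, rfl⟩
  exact ⟨m + n, Fin.append f₁ f₂, Fin.append g₁ g₂, by simp [Fin.sum_univ_add],
    by simp [Fin.sum_univ_add]⟩

lemma projNorm_add_le (u v : E ⊗[ℂ] F) :
    projNorm E F (u + v) ≤ projNorm E F u + projNorm E F v := by
  rw [projNorm_eq_sInf, projNorm_eq_sInf, projNorm_eq_sInf, ← csInf_add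
    (projNormSet_nonempty u) (projNormSet_bddBelow u) (projNormSet_nonempty v)
    (projNormSet_bddBelow v)]
  exact csInf_le_csInf (projNormSet_bddBelow _)
    ((projNormSet_nonempty u).add (projNormSet_nonempty v)) (projNormSet_add_subset u v)

lemma projNorm_le_mul_of_forall_mem {u : E ⊗[ℂ] F} {v : E' ⊗[ℂ] F'} {k : ℝ} (hk : 0 ≤ k)
    (h : ∀ r ∈ projNormSet u, ∃ r' ∈ projNormSet v, r' ≤ k * r) :
    projNorm E' F' v ≤ k * projNorm E F u := by
  rw [projNorm_eq_sInf u, ← smul_eq_mul, ← Real.sInf_smul_of_nonneg hk]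
  refine le_csInf (projNormSet_nonempty u).smul_set ?_
  rintro _ ⟨r, hr, rfl⟩
  obtain ⟨r', hr', hle⟩ := h r hr
  exact (projNorm_le_of_mem hr').trans hle

lemma projNorm_map_le (L : E →L[ℂ] E') (R : F →L[ℂ] F') (u : E ⊗[ℂ] F) :
    projNorm E' F' (TensorProduct.map L.toLinearMap R.toLinearMap u) ≤
      ‖L‖ * ‖R‖ * projNorm E F u := by
  refine projNorm_le_mul_of_forall_mem (by positivity) ?_
  rintro _ ⟨n, f, g, rfl, rfl⟩
  refine ⟨_, ⟨n, fun i => L (f i), fun i => R (g i), by simp, rfl⟩, ?_⟩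
  rw [Finset.mul_sum]
  refine Finset.sum_le_sum fun i _ => ?_
  calc ‖L (f i)‖ * ‖R (g i)‖ ≤ (‖L‖ * ‖f i‖) * (‖R‖ * ‖g i‖) := by
        gcongr
        exacts [L.le_opNorm _, R.le_opNorm _]
    _ = ‖L‖ * ‖R‖ * (‖f i‖ * ‖g i‖) := by ring

lemma projNorm_smul_le (c : ℂ) (u : E ⊗[ℂ] F) :
    projNorm E F (c • u) ≤ ‖c‖ * projNorm E F u := by
  refine projNorm_le_mul_of_forall_mem (norm_nonneg c) ?_
  rintro _ ⟨n, f, g, rfl, rfl⟩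
  refine ⟨_, ⟨n, fun i => c • f i, g, by simp [Finset.smul_sum, TensorProduct.smul_tmul'], rfl⟩,
    ?_⟩
  simp [norm_smul, Finset.mul_sum, mul_assoc]

noncomputable def projSeminorm : Seminorm ℂ (E ⊗[ℂ] F) :=
  Seminorm.ofSMulLE (projNorm E F) projNorm_zero projNorm_add_le projNorm_smul_le

end ProjNorm

lemma norm_mul'_le_projNorm {A : Type*} [NormedRing A] [NormedAlgebra ℂ A] (u : A ⊗[ℂ] A) :
    ‖LinearMap.mul' ℂ A u‖ ≤ projNorm A A u := by
  refine le_csInf (projNormSet_nonempty u) ?_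
  rintro _ ⟨n, f, g, rfl, rfl⟩
  simpa using norm_sum_le_of_le Finset.univ fun i _ => norm_mul_le (f i) (g i)

theorem nonempty_projTensorWitness (E F : Type) [NormedAddCommGroup E] [NormedSpace ℂ E]
    [NormedAddCommGroup F] [NormedSpace ℂ F] : Nonempty (ProjTensorWitness E F) := by
  let _ : SeminormedAddCommGroup (E ⊗[ℂ] F) :=
    (projSeminorm (E := E) (F := F)).toAddGroupSeminorm.toSeminormedAddCommGroup
  let _ : NormedSpace ℂ (E ⊗[ℂ] F) := ⟨projNorm_smul_le⟩
  exact ⟨{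
    X := UniformSpace.Completion (E ⊗[ℂ] F)
    incl := UniformSpace.Completion.toComplL.toLinearMap
    dense_incl := UniformSpace.Completion.denseRange_coe
    norm_incl := UniformSpace.Completion.norm_coe }⟩

section TensorActions

variable {A : Type*} [NormedRing A] [NormedAlgebra ℂ A]

noncomputable def tmulLeftₗ : A →ₗ[ℂ] A ⊗[ℂ] A →ₗ[ℂ] A ⊗[ℂ] A :=
  (LinearMap.rTensorHom A).comp (LinearMap.mul ℂ A)

noncomputable def tmulRightₗ : A →ₗ[ℂ] A ⊗[ℂ] A →ₗ[ℂ] A ⊗[ℂ] A :=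
  (LinearMap.lTensorHom A).comp (LinearMap.mul ℂ A).flip

lemma tmulLeft_tmul (a x y : A) : tmulLeft a (x ⊗ₜ[ℂ] y) = (a * x) ⊗ₜ[ℂ] y := rfl

lemma tmulRight_tmul (a x y : A) : tmulRight a (x ⊗ₜ[ℂ] y) = x ⊗ₜ[ℂ] (y * a) := rfl

lemma tmulLeft_mul (a b : A) : tmulLeft (a * b) = tmulLeft a ∘ₗ tmulLeft b :=
  TensorProduct.ext' fun x y => by simp [tmulLeft_tmul, mul_assoc]

lemma tmulRight_mul (a b : A) : tmulRight (a * b) = tmulRight b ∘ₗ tmulRight a :=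
  TensorProduct.ext' fun x y => by simp [tmulRight_tmul, mul_assoc]

lemma tmulLeft_comp_tmulRight (a b : A) :
    tmulLeft a ∘ₗ tmulRight b = tmulRight b ∘ₗ tmulLeft a :=
  TensorProduct.ext' fun x y => by simp [tmulLeft_tmul, tmulRight_tmul]

lemma projNorm_tmulLeft_le (a : A) (u : A ⊗[ℂ] A) :
    projNorm A A (tmulLeft a u) ≤ ‖a‖ * projNorm A A u := by
  refine (projNorm_map_le (ContinuousLinearMap.mul ℂ A a) (ContinuousLinearMap.id ℂ A) u).trans ?_
  gcongr
  · exact projNorm_nonneg u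
  calc ‖ContinuousLinearMap.mul ℂ A a‖ * ‖ContinuousLinearMap.id ℂ A‖ ≤ ‖a‖ * 1 := by
        gcongr
        exacts [ContinuousLinearMap.opNorm_mul_apply_le ℂ A a, ContinuousLinearMap.norm_id_le]
    _ = ‖a‖ := mul_one _

lemma projNorm_tmulRight_le (a : A) (u : A ⊗[ℂ] A) :
    projNorm A A (tmulRight a u) ≤ ‖a‖ * projNorm A A u := by
  refine (projNorm_map_le (ContinuousLinearMap.id ℂ A)
    ((ContinuousLinearMap.mul ℂ A).flip a) u).trans ?_
  gcongr
  · exact projNorm_nonneg u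
  calc ‖ContinuousLinearMap.id ℂ A‖ * ‖(ContinuousLinearMap.mul ℂ A).flip a‖ ≤ 1 * ‖a‖ := by
        gcongr
        · exact ContinuousLinearMap.norm_id_le
        · exact ContinuousLinearMap.opNorm_le_bound _ (norm_nonneg a) fun x => by
            simpa [mul_comm ‖a‖] using norm_mul_le x a
    _ = ‖a‖ := one_mul _

end TensorActions

namespace ProjTensorWitness

section

variable {E F : Type*} [NormedAddCommGroup E] [NormedSpace ℂ E]
  [NormedAddCommGroup F] [NormedSpace ℂ F] (T : ProjTensorWitness E F)

lemma clm_ext_incl {G : Type*} [NormedAddCommGroup G] [NormedSpace ℂ G] {f g : T.X →L[ℂ] G}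
    (h : ∀ u, f (T.incl u) = g (T.incl u)) : f = g :=
  ContinuousLinearMap.coeFn_injective <|
    T.dense_incl.equalizer f.continuous g.continuous (funext h)

lemma extendOfNorm_incl {G : Type*} [NormedAddCommGroup G] [NormedSpace ℂ G] [CompleteSpace G]
    {f : E ⊗[ℂ] F →ₗ[ℂ] G} {C : ℝ} (hf : ∀ u, ‖f u‖ ≤ C * projNorm E F u) (u : E ⊗[ℂ] F) :
    f.extendOfNorm T.incl (T.incl u) = f u :=
  LinearMap.extendOfNorm_eq T.dense_incl ⟨C, fun u => T.norm_incl u ▸ hf u⟩ u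

noncomputable def inclTmul : E →L[ℂ] F →L[ℂ] T.X :=
  LinearMap.mkContinuous₂ ((TensorProduct.mk ℂ E F).compr₂ T.incl) 1 fun x y => by
    simpa [T.norm_incl] using projNorm_tmul_le x y

@[simp]
lemma inclTmul_apply (x : E) (y : F) : T.inclTmul x y = T.incl (x ⊗ₜ[ℂ] y) := rfl

lemma norm_incl_comp_le {f : E ⊗[ℂ] F →ₗ[ℂ] E ⊗[ℂ] F} {C : ℝ}
    (hf : ∀ u, projNorm E F (f u) ≤ C * projNorm E F u) (u : E ⊗[ℂ] F) :
    ‖(T.incl ∘ₗ f) u‖ ≤ C * projNorm E F u := by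
  rw [LinearMap.comp_apply, T.norm_incl]
  exact hf u

noncomputable def extendAction {V : Type*} [NormedAddCommGroup V] [NormedSpace ℂ V]
    (φ : V →ₗ[ℂ] E ⊗[ℂ] F →ₗ[ℂ] E ⊗[ℂ] F)
    (hφ : ∀ a u, projNorm E F (φ a u) ≤ ‖a‖ * projNorm E F u) : V →L[ℂ] T.X →L[ℂ] T.X :=
  have h a u : (T.incl ∘ₗ φ a).extendOfNorm T.incl (T.incl u) = T.incl (φ a u) :=
    T.extendOfNorm_incl (T.norm_incl_comp_le (hφ a)) u
  LinearMap.mkContinuous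
    { toFun := fun a => (T.incl ∘ₗ φ a).extendOfNorm T.incl
      map_add' := fun a b => T.clm_ext_incl fun u => by
        rw [add_apply, h, h, h]
        simp
      map_smul' := fun c a => T.clm_ext_incl fun u => by
        rw [smul_apply, h, h]
        simp }
    1 fun a => by
      rw [one_mul]
      exact LinearMap.opNorm_extendOfNorm_le T.dense_incl (norm_nonneg a)
        fun u => by rw [T.norm_incl]; exact T.norm_incl_comp_le (hφ a) u

lemma extendAction_incl {V : Type*} [NormedAddCommGroup V] [NormedSpace ℂ V]
    (φ : V →ₗ[ℂ] E ⊗[ℂ] F →ₗ[ℂ] E ⊗[ℂ] F)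
    (hφ : ∀ a u, projNorm E F (φ a u) ≤ ‖a‖ * projNorm E F u) (a : V) (u : E ⊗[ℂ] F) :
    T.extendAction φ hφ a (T.incl u) = T.incl (φ a u) :=
  T.extendOfNorm_incl (T.norm_incl_comp_le (hφ a)) u

end

variable {A : Type} [NormedRing A] [NormedAlgebra ℂ A] (T : ProjTensorWitness A A)

noncomputable def lact : A →L[ℂ] T.X →L[ℂ] T.X :=
  T.extendAction tmulLeftₗ projNorm_tmulLeft_le

noncomputable def ract : A →L[ℂ] T.X →L[ℂ] T.X :=
  T.extendAction tmulRightₗ projNorm_tmulRight_le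

lemma lact_incl (a : A) (u : A ⊗[ℂ] A) : T.lact a (T.incl u) = T.incl (tmulLeft a u) :=
  T.extendAction_incl _ _ a u

lemma ract_incl (a : A) (u : A ⊗[ℂ] A) : T.ract a (T.incl u) = T.incl (tmulRight a u) :=
  T.extendAction_incl _ _ a u

lemma isBimodule : IsBimodule T.lact T.ract := by
  refine ⟨fun a b => T.clm_ext_incl fun u => ?_, fun a b => T.clm_ext_incl fun u => ?_,
    fun a b => T.clm_ext_incl fun u => ?_⟩
  · simp only [ContinuousLinearMap.comp_apply, lact_incl, tmulLeft_mul, LinearMap.comp_apply]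
  · simp only [ContinuousLinearMap.comp_apply, ract_incl, tmulRight_mul, LinearMap.comp_apply]
  · simp only [ContinuousLinearMap.comp_apply, lact_incl, ract_incl]
    exact congrArg T.incl (LinearMap.congr_fun (tmulLeft_comp_tmulRight a b) u)

noncomputable def pihat [CompleteSpace A] : T.X →L[ℂ] A :=
  (LinearMap.mul' ℂ A).extendOfNorm T.incl

lemma pihat_incl [CompleteSpace A] (u : A ⊗[ℂ] A) :
    T.pihat (T.incl u) = LinearMap.mul' ℂ A u :=
  T.extendOfNorm_incl (C := 1) (fun u => by rw [one_mul]; exact norm_mul'_le_projNorm u) u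

noncomputable def toBiprojectiveWitness [CompleteSpace A] (d : A) (hd : ∀ b, d * b = b)
    (hcomm : ∀ a b, T.incl (d ⊗ₜ[ℂ] (a * b)) = T.incl ((a * d) ⊗ₜ[ℂ] b)) :
    BiprojectiveWitness A where
  X := T.X
  incl := T.incl
  dense_incl := T.dense_incl
  norm_incl := T.norm_incl
  lact := T.lact
  ract := T.ract
  bimod := T.isBimodule
  lact_incl := T.lact_incl
  ract_incl := T.ract_incl
  pihat := T.pihat
  pihat_incl := T.pihat_incl
  rho := T.inclTmul d
  rho_left a b := by rw [inclTmul_apply, inclTmul_apply, lact_incl, tmulLeft_tmul, hcomm]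
  rho_right a b := by rw [inclTmul_apply, inclTmul_apply, ract_incl, tmulRight_tmul]
  pihat_rho a := by rw [inclTmul_apply, pihat_incl, LinearMap.mul'_apply, hd]

end ProjTensorWitness

namespace BeurlingStructure

variable {S : Type} [Mul S] {ω : S → ℝ} {A : Type} [NormedRing A] [NormedAlgebra ℂ A]
  (B : BeurlingStructure S ω A)

lemma clm_ext_delta {G : Type*} [NormedAddCommGroup G] [NormedSpace ℂ G] {f g : A →L[ℂ] G}
    (h : ∀ s, f (B.delta s) = g (B.delta s)) : f = g := by
  ext a
  have hf := (B.hasSum_coeff a).mapL f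
  have hg := (B.hasSum_coeff a).mapL g
  simp only [map_smul, h] at hf hg
  exact hf.unique hg

lemma delta_mul_eq_self (hS : ∀ s t : S, s * t = t) (s : S) (b : A) : B.delta s * b = b := by
  have h : ContinuousLinearMap.mul ℂ A (B.delta s) = ContinuousLinearMap.id ℂ A :=
    B.clm_ext_delta fun t => by simp [B.delta_mul, hS]
  simpa using congrArg (· b) h

lemma incl_delta_tmul_mul (hS : ∀ s t : S, s * t = t) (T : ProjTensorWitness A A) (t₀ : S)
    (a b : A) :
    T.incl (B.delta t₀ ⊗ₜ[ℂ] (a * b)) = T.incl ((a * B.delta t₀) ⊗ₜ[ℂ] b) := by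
  have h : (T.inclTmul (B.delta t₀)).comp ((ContinuousLinearMap.mul ℂ A).flip b) =
      (T.inclTmul.flip b).comp ((ContinuousLinearMap.mul ℂ A).flip (B.delta t₀)) :=
    B.clm_ext_delta fun s => by simp [B.delta_mul_eq_self hS]
  simpa using congrArg (· a) h

end BeurlingStructure

theorem stmt2_general (S : Type) [Mul S] (hS : ∀ s t : S, s * t = t)
    (ω : S → ℝ)
    (A : Type) [NormedRing A] [NormedAlgebra ℂ A] [CompleteSpace A]
    (B : BeurlingStructure S ω A) (t₀ : S) :
    ∃ W : BiprojectiveWitness A, ∀ a : A, W.rho a = W.incl (B.delta t₀ ⊗ₜ[ℂ] a) := by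
  obtain ⟨T⟩ := nonempty_projTensorWitness A A
  exact ⟨T.toBiprojectiveWitness (B.delta t₀) (B.delta_mul_eq_self hS t₀)
    (B.incl_delta_tmul_mul hS T t₀), fun _ => rfl⟩

/-- For a right zero semigroup `S` with weight `ω`, `ℓ¹(S,ω)` is
biprojective, witnessed by `ρ(f) = δ_{t₀} ⊗ f` for any fixed `t₀ ∈ S`. -/
theorem stmt2 (S : Type) [Mul S] (hS : ∀ s t : S, s * t = t)
    (ω : S → ℝ) (hω : IsWeight ω)
    (A : Type) [NormedRing A] [NormedAlgebra ℂ A] [CompleteSpace A]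
    (B : BeurlingStructure S ω A) (t₀ : S) :
    ∃ W : BiprojectiveWitness A, ∀ a : A, W.rho a = W.incl (B.delta t₀ ⊗ₜ[ℂ] a) :=
  stmt2_general S hS ω A B t₀
end

section
/- Let S be a rectangular band semigroup and ω a weight on S. Then ℓ¹(S, ω) is amenable if and only if S is a singleton. -/
open scoped TensorProduct
open Filter
open scoped Classical

/-!
A rectangular band satisfies `x * y * z = x * z`, so `s * t` and `s` act identically on the left
and `t * s` and `s` identically on the right. If `s * t ≠ s`, then `δ_{st} - δ_s` is a nonzero left
annihilator of `ℓ¹(S, ω)`, and if `t * s ≠ s`, then `δ_{ts} - δ_s` is a nonzero right annihilator;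
but an amenable algebra has no nonzero one-sided annihilators. So amenability forces
`s * t = s = t * s`, whence `t = t * s * t = s`. Conversely, for `S = {s}` the algebra is `ℂ δ_s`
with `δ_s` idempotent, and every derivation `D` is implemented by `D(δ_s)·δ_s - δ_s·D(δ_s)`.
-/

section Amenable

variable {A : Type} [NormedRing A] [NormedAlgebra ℂ A]

theorem isAmenable_of_forall_eq_smul {e : A} (he : IsIdempotentElem e)
    (h : ∀ a : A, ∃ c : ℂ, a = c • e) : IsAmenable A := by
  intro E _ _ l r ⟨hl, hr, hlr⟩ D hD
  set φ := D e
  have hφ : ∀ x, φ x = φ (r e x) + φ (l e x) := fun x => by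
    simpa [he.eq] using congr($(hD e e) x)
  have hP : ∀ x, r e (r e x) = r e x := fun x => by simpa [he.eq] using congr($(hr e e) x).symm
  have hQ : ∀ x, l e (l e x) = l e x := fun x => by simpa [he.eq] using congr($(hl e e) x).symm
  have hPQ : ∀ x, l e (r e x) = r e (l e x) := fun x => congr($(hlr e e) x)
  have hφPQ : ∀ x, φ (r e (l e x)) = 0 := fun x => by
    have := hφ (l e x)
    rw [hQ] at this
    linear_combination -this
  refine ⟨φ.comp (r e) - φ.comp (l e), fun a => ?_⟩
  obtain ⟨c, rfl⟩ := h a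
  ext x
  simp only [map_smul, smul_apply, sub_apply, ContinuousLinearMap.comp_apply, smul_eq_mul, hP,
    hQ, hPQ, hφPQ]
  rw [hφ x]
  ring

theorem IsAmenable.eq_zero_of_forall_mul_eq_zero (hA : IsAmenable A) {a : A}
    (ha : ∀ x, a * x = 0) : a = 0 := by
  -- Evaluation `A → A**` is a derivation into the dual of `A*` with the zero left action.
  let r : A →L[ℂ] StrongDual ℂ A →L[ℂ] StrongDual ℂ A :=
    (ContinuousLinearMap.compL ℂ A A ℂ).flip.comp (ContinuousLinearMap.mul ℂ A)
  have hr : ∀ b f x, r b f x = f (b * x) := fun _ _ _ => rfl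
  have hbimod : IsBimodule 0 r :=
    ⟨fun _ _ => by simp, fun _ _ => by ext; simp [hr, mul_assoc], fun _ _ => by simp⟩
  obtain ⟨F, hF⟩ := hA _ 0 r hbimod (ContinuousLinearMap.apply ℂ ℂ) fun b c => by
    ext f; simp [hr]
  have hra : r a = 0 := by ext; simp [hr, ha]
  refine SeparatingDual.eq_zero_of_forall_dual_eq_zero (R := ℂ) fun g => ?_
  simpa [hra] using congr($(hF a) g)

theorem IsAmenable.eq_zero_of_forall_mul_eq_zero' (hA : IsAmenable A) {a : A}
    (ha : ∀ x, x * a = 0) : a = 0 := by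
  let l : A →L[ℂ] StrongDual ℂ A →L[ℂ] StrongDual ℂ A :=
    (ContinuousLinearMap.compL ℂ A A ℂ).flip.comp (ContinuousLinearMap.mul ℂ A).flip
  have hl : ∀ b f x, l b f x = f (x * b) := fun _ _ _ => rfl
  have hbimod : IsBimodule l 0 :=
    ⟨fun _ _ => by ext; simp [hl, mul_assoc], fun _ _ => by simp, fun _ _ => by simp⟩
  obtain ⟨F, hF⟩ := hA _ l 0 hbimod (ContinuousLinearMap.apply ℂ ℂ) fun b c => by
    ext f; simp [hl]
  have hla : l a = 0 := by ext; simp [hl, ha]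
  refine SeparatingDual.eq_zero_of_forall_dual_eq_zero (R := ℂ) fun g => ?_
  simpa [hla] using congr($(hF a) g)

end Amenable

theorem mul_mul_eq_mul_of_rect {S : Type*} [Semigroup S] (hrect : ∀ s t : S, s * t * s = s)
    (x y z : S) : x * y * z = x * z :=
  calc x * y * z = x * z * x * y * z := by rw [hrect]
    _ = x * (z * (x * y) * z) := by simp only [mul_assoc]
    _ = x * z := by rw [hrect]

namespace BeurlingStructure

variable {S : Type*} [Mul S] {ω : S → ℝ} {A : Type} [NormedRing A] [NormedAlgebra ℂ A]

theorem delta_injective (B : BeurlingStructure S ω A) : Function.Injective B.delta :=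
  fun p q h => by simpa [B.coeff_delta] using congr(B.coeff $h p)

theorem delta_mul_eq_of_forall_mul_eq (B : BeurlingStructure S ω A) {p q : S}
    (h : ∀ s, p * s = q * s) (a : A) :
    B.delta p * a = B.delta q * a := by
  refine ((B.hasSum_coeff a).mul_left (B.delta p)).unique ?_
  simpa only [mul_smul_comm, B.delta_mul, h] using (B.hasSum_coeff a).mul_left (B.delta q)

theorem mul_delta_eq_of_forall_mul_eq (B : BeurlingStructure S ω A) {p q : S}
    (h : ∀ s, s * p = s * q) (a : A) :
    a * B.delta p = a * B.delta q := by
  refine ((B.hasSum_coeff a).mul_right (B.delta p)).unique ?_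
  simpa only [smul_mul_assoc, B.delta_mul, h] using (B.hasSum_coeff a).mul_right (B.delta q)

theorem eq_of_forall_mul_eq (B : BeurlingStructure S ω A) (hA : IsAmenable A) {p q : S}
    (h : ∀ s, p * s = q * s) : p = q :=
  B.delta_injective <| sub_eq_zero.mp <| hA.eq_zero_of_forall_mul_eq_zero fun a => by
    rw [sub_mul, B.delta_mul_eq_of_forall_mul_eq h, sub_self]

theorem eq_of_forall_mul_eq' (B : BeurlingStructure S ω A) (hA : IsAmenable A) {p q : S}
    (h : ∀ s, s * p = s * q) : p = q :=
  B.delta_injective <| sub_eq_zero.mp <| hA.eq_zero_of_forall_mul_eq_zero' fun a => by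
    rw [mul_sub, B.mul_delta_eq_of_forall_mul_eq h, sub_self]

theorem isAmenable [Subsingleton S] (B : BeurlingStructure S ω A) : IsAmenable A := by
  obtain _ | ⟨⟨s⟩⟩ := isEmpty_or_nonempty S
  · exact isAmenable_of_forall_eq_smul .zero fun a =>
      ⟨0, ((B.hasSum_coeff a).unique hasSum_empty).trans (smul_zero 0).symm⟩
  · refine isAmenable_of_forall_eq_smul (e := B.delta s) ?_ fun a => ⟨B.coeff a s, ?_⟩
    · rw [IsIdempotentElem, B.delta_mul, Subsingleton.elim (s * s) s]
    · exact (B.hasSum_coeff a).unique <|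
        hasSum_single s fun t ht => (ht (Subsingleton.elim t s)).elim

end BeurlingStructure

theorem stmt8_general (S : Type) [Semigroup S]
    (hrect : ∀ s t : S, s * t * s = s)
    (ω : S → ℝ)
    (A : Type) [NormedRing A] [NormedAlgebra ℂ A]
    (B : BeurlingStructure S ω A) :
    IsAmenable A ↔ Subsingleton S := by
  refine ⟨fun hA => ⟨fun s t => ?_⟩, fun _ => B.isAmenable⟩
  have hst : s * t = s := B.eq_of_forall_mul_eq hA fun u => mul_mul_eq_mul_of_rect hrect s t u
  have hts : t * s = s := B.eq_of_forall_mul_eq' hA fun u => by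
    rw [← mul_assoc, mul_mul_eq_mul_of_rect hrect]
  calc s = t * s * t := by rw [hts, hst]
    _ = t := hrect t s

/-- For a rectangular band semigroup `S` with weight `ω`, `ℓ¹(S,ω)` is
amenable iff `S` is a singleton. -/
theorem stmt8 (S : Type) [Semigroup S] [Nonempty S]
    (hband : ∀ s : S, s * s = s) (hrect : ∀ s t : S, s * t * s = s)
    (ω : S → ℝ) (hω : IsWeight ω)
    (A : Type) [NormedRing A] [NormedAlgebra ℂ A] [CompleteSpace A]
    (B : BeurlingStructure S ω A) :
    IsAmenable A ↔ Subsingleton S :=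
  stmt8_general S hrect ω A B
end

section
/- Let S be a left cancellative semigroup and ω a weight on S. If ℓ¹(S, ω) is pseudo-amenable, then S is a group. -/
open scoped TensorProduct
open Filter
open scoped Classical

/-!
Let `(mᵢ)` be an approximate diagonal and `uᵢ = π(mᵢ)`. Left multiplication by `δ_s` only
translates coefficients, so `δ_s uᵢ → δ_s` forces some `e` with `s e = s` and makes the
coefficients of `uᵢ` converge pointwise to the indicator of `e`; hence `e` is the same for all `s`,
and left cancellation makes it a two-sided identity.

If `s` had no left inverse, then `mᵢ δ_s` would vanish on every pair `(s x, y)` with `x y = e`, so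
there the coefficients of `δ_s mᵢ - mᵢ δ_s` are those of `mᵢ` at `(x, y)`. Since
`ω s ≤ ω (s x) ω y`, summing over the fibre of `e` gives
`ω s * ‖uᵢ(e)‖ ≤ projNorm (δ_s mᵢ - mᵢ δ_s)`, whose left side tends to `ω s > 0` and right side
to `0`. A left inverse `t` of `s` is a right inverse too, after cancelling `t` in `t s t = t e`.
-/

namespace BeurlingStructure

open scoped Topology

section Coefficients

variable {S : Type*} [Mul S] {ω : S → ℝ} {A : Type*} [NormedRing A] [NormedAlgebra ℂ A]
  (B : BeurlingStructure S ω A)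

theorem summable_norm_coeff_mul (a : A) : Summable fun s => ‖B.coeff a s‖ * ω s := by
  by_contra h
  -- a non-summable `tsum` is `0`, so `‖a‖ = 0`
  have ha : a = 0 := norm_eq_zero.mp ((B.norm_eq a).trans (tsum_eq_zero_of_not_summable h))
  exact h (by simp [ha])

theorem norm_coeff_mul_le (hω : IsWeight ω) (a : A) (x : S) : ‖B.coeff a x‖ * ω x ≤ ‖a‖ :=
  B.norm_eq a ▸ (B.summable_norm_coeff_mul a).le_tsum x
    fun s _ => mul_nonneg (norm_nonneg _) (hω.1 s).le

noncomputable def coeffCLM (hω : IsWeight ω) (x : S) : A →L[ℂ] ℂ :=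
  ((LinearMap.proj x).comp B.coeff).mkContinuous (ω x)⁻¹ fun a => by
    rw [inv_mul_eq_div, le_div_iff₀ (hω.1 x)]
    exact B.norm_coeff_mul_le hω a x

@[simp]
theorem coeffCLM_apply (hω : IsWeight ω) (x : S) (a : A) : B.coeffCLM hω x a = B.coeff a x :=
  rfl

theorem hasSum_coeff_map (hω : IsWeight ω) (L : A →L[ℂ] A) (a : A) (x : S) :
    HasSum (fun u => B.coeff a u * B.coeff (L (B.delta u)) x) (B.coeff (L a) x) := by
  simpa using ((B.hasSum_coeff a).mapL L).mapL (B.coeffCLM hω x)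

theorem coeff_delta_mul_eq_zero (hω : IsWeight ω) {s x : S} (hx : ∀ u, s * u ≠ x) (a : A) :
    B.coeff (B.delta s * a) x = 0 := by
  have h := B.hasSum_coeff_map hω (ContinuousLinearMap.mul ℂ A (B.delta s)) a x
  simp only [ContinuousLinearMap.mul_apply', B.delta_mul, B.coeff_delta, fun u => (hx u).symm,
    if_false, mul_zero] at h
  exact h.unique hasSum_zero

theorem coeff_mul_delta_eq_zero (hω : IsWeight ω) {s x : S} (hx : ∀ v, v * s ≠ x) (a : A) :
    B.coeff (a * B.delta s) x = 0 := by
  have h := B.hasSum_coeff_map hω ((ContinuousLinearMap.mul ℂ A).flip (B.delta s)) a x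
  simp only [ContinuousLinearMap.flip_apply, ContinuousLinearMap.mul_apply', B.delta_mul,
    B.coeff_delta, fun v => (hx v).symm, if_false, mul_zero] at h
  exact h.unique hasSum_zero

theorem coeff_delta_mul_mul [IsLeftCancelMul S] (hω : IsWeight ω) (s u : S) (a : A) :
    B.coeff (B.delta s * a) (s * u) = B.coeff a u := by
  have h := B.hasSum_coeff_map hω (ContinuousLinearMap.mul ℂ A (B.delta s)) a (s * u)
  simp only [ContinuousLinearMap.mul_apply', B.delta_mul, B.coeff_delta, mul_left_cancel_iff,
    mul_ite, mul_one, mul_zero] at h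
  simpa using h.unique (hasSum_single u fun v hv => if_neg (Ne.symm hv))

theorem exists_mul_eq_self_of_tendsto_mul (B : BeurlingStructure S ω A) (hω : IsWeight ω)
    {ι : Type*} {l : Filter ι} [l.NeBot]
    {u : ι → A} (hu : ∀ a, Tendsto (fun i => a * u i) l (𝓝 a)) (s : S) : ∃ e, s * e = s := by
  by_contra! hs
  have h := ((B.coeffCLM hω s).continuous.tendsto _).comp (hu (B.delta s))
  simp only [Function.comp_def, coeffCLM_apply, B.coeff_delta_mul_eq_zero hω hs, B.coeff_delta,
    if_true] at h
  exact one_ne_zero (tendsto_nhds_unique h tendsto_const_nhds)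

theorem tendsto_coeff_of_tendsto_mul [IsLeftCancelMul S] (hω : IsWeight ω) {ι : Type*}
    {l : Filter ι} {u : ι → A} (hu : ∀ a, Tendsto (fun i => a * u i) l (𝓝 a))
    {s e : S} (hse : s * e = s) (x : S) :
    Tendsto (fun i => B.coeff (u i) x) l (𝓝 (if x = e then 1 else 0)) := by
  have h := ((B.coeffCLM hω (s * x)).continuous.tendsto _).comp (hu (B.delta s))
  simp only [Function.comp_def, coeffCLM_apply, B.coeff_delta_mul_mul hω, B.coeff_delta] at h
  have hiff : s * x = s ↔ x = e := ⟨fun h => mul_left_cancel (h.trans hse.symm), fun h => h ▸ hse⟩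
  simpa only [hiff] using h

/-- The coefficients of `m` on `S × S`: its image under
`ℓ¹(S, ω) ⊗̂ ℓ¹(S, ω) ≅ ℓ¹(S × S, ω × ω)`. -/
noncomputable def coeff₂ : A ⊗[ℂ] A →ₗ[ℂ] S × S → ℂ :=
  TensorProduct.lift <| (LinearMap.mul ℂ (S × S → ℂ)).compl₁₂
    ((LinearMap.funLeft ℂ ℂ Prod.fst).comp B.coeff) ((LinearMap.funLeft ℂ ℂ Prod.snd).comp B.coeff)

@[simp]
theorem coeff₂_tmul (a b : A) (p : S × S) :
    B.coeff₂ (a ⊗ₜ b) p = B.coeff a p.1 * B.coeff b p.2 :=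
  rfl

theorem hasSum_norm_coeff_mul_tmul (hω : IsWeight ω) (a b : A) :
    HasSum (fun p : S × S => ‖B.coeff a p.1‖ * ω p.1 * (‖B.coeff b p.2‖ * ω p.2)) (‖a‖ * ‖b‖) := by
  have hnonneg (c : A) (s : S) : 0 ≤ ‖B.coeff c s‖ * ω s := mul_nonneg (norm_nonneg _) (hω.1 s).le
  have ha := (B.summable_norm_coeff_mul a).hasSum
  have hb := (B.summable_norm_coeff_mul b).hasSum
  rw [← B.norm_eq] at ha hb
  exact ha.mul hb <| ha.summable.mul_of_nonneg hb.summable (hnonneg a) (hnonneg b)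

theorem norm_coeff₂_sum_tmul_mul_le {n : ℕ} (hω : IsWeight ω) (f g : Fin n → A) (p : S × S) :
    ‖B.coeff₂ (∑ i, f i ⊗ₜ g i) p‖ * (ω p.1 * ω p.2) ≤
      ∑ i, ‖B.coeff (f i) p.1‖ * ω p.1 * (‖B.coeff (g i) p.2‖ * ω p.2) := by
  calc ‖B.coeff₂ (∑ i, f i ⊗ₜ g i) p‖ * (ω p.1 * ω p.2)
      ≤ (∑ i, ‖B.coeff₂ (f i ⊗ₜ g i) p‖) * (ω p.1 * ω p.2) := by
        rw [map_sum, Finset.sum_apply]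
        gcongr
        · exact (mul_pos (hω.1 _) (hω.1 _)).le
        · exact norm_sum_le _ _
    _ = _ := by
        rw [Finset.sum_mul]
        exact Finset.sum_congr rfl fun i _ => by rw [coeff₂_tmul, norm_mul]; ring

theorem summable_norm_coeff₂_mul (hω : IsWeight ω) (m : A ⊗[ℂ] A) :
    Summable fun p : S × S => ‖B.coeff₂ m p‖ * (ω p.1 * ω p.2) := by
  obtain ⟨n, f, g, rfl⟩ := TensorProduct.exists_sum_tmul_eq m
  exact (hasSum_sum fun i _ => B.hasSum_norm_coeff_mul_tmul hω (f i) (g i)).summable.of_nonneg_of_le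
    (fun p => mul_nonneg (norm_nonneg _) (mul_pos (hω.1 _) (hω.1 _)).le)
    (B.norm_coeff₂_sum_tmul_mul_le hω f g)

theorem tsum_norm_coeff₂_mul_le_projNorm (hω : IsWeight ω) (m : A ⊗[ℂ] A) :
    ∑' p : S × S, ‖B.coeff₂ m p‖ * (ω p.1 * ω p.2) ≤ projNorm A A m := by
  obtain ⟨n, f, g, hm⟩ := TensorProduct.exists_sum_tmul_eq m
  refine le_csInf ⟨_, n, f, g, hm, rfl⟩ ?_
  rintro _ ⟨n, f, g, rfl, rfl⟩
  have hsum := hasSum_sum fun i (_ : i ∈ Finset.univ) => B.hasSum_norm_coeff_mul_tmul hω (f i) (g i)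
  exact hsum.tsum_eq ▸ (B.summable_norm_coeff₂_mul hω _).tsum_le_tsum
    (B.norm_coeff₂_sum_tmul_mul_le hω f g) hsum.summable

theorem summable_coeff₂_fiber (hω : IsWeight ω) (m : A ⊗[ℂ] A) (x : S) :
    Summable fun p : S × S => if p.1 * p.2 = x then B.coeff₂ m p else 0 := by
  refine ((B.summable_norm_coeff₂_mul hω m).div_const (ω x)).of_norm_bounded fun p => ?_
  split_ifs with hp
  · rw [le_div_iff₀ (hω.1 x)]
    gcongr
    exact hp ▸ hω.2 p.1 p.2
  · rw [norm_zero]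
    exact div_nonneg (mul_nonneg (norm_nonneg _) (mul_pos (hω.1 _) (hω.1 _)).le) (hω.1 x).le

theorem coeff_mul'_eq_tsum (hω : IsWeight ω) (m : A ⊗[ℂ] A) (x : S) :
    B.coeff (LinearMap.mul' ℂ A m) x =
      ∑' p : S × S, if p.1 * p.2 = x then B.coeff₂ m p else 0 := by
  induction m using TensorProduct.induction_on with
  | zero => simp
  | add m₁ m₂ h₁ h₂ =>
    rw [map_add, map_add, Pi.add_apply, h₁, h₂,
      ← (B.summable_coeff₂_fiber hω m₁ x).tsum_add (B.summable_coeff₂_fiber hω m₂ x)]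
    exact tsum_congr fun p => by split_ifs <;> simp
  | tmul a b =>
    have hfiber := B.summable_coeff₂_fiber hω (a ⊗ₜ b) x
    have hab := B.hasSum_coeff_map hω ((ContinuousLinearMap.mul ℂ A).flip b) a x
    simp only [ContinuousLinearMap.flip_apply, ContinuousLinearMap.mul_apply'] at hab
    rw [hfiber.tsum_prod' hfiber.prod_factor, LinearMap.mul'_apply, ← hab.tsum_eq]
    refine tsum_congr fun u => ?_
    have hb := B.hasSum_coeff_map hω (ContinuousLinearMap.mul ℂ A (B.delta u)) b x
    simp only [ContinuousLinearMap.mul_apply', B.delta_mul, B.coeff_delta] at hb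
    rw [← hb.tsum_eq, ← tsum_mul_left]
    exact tsum_congr fun v => by simp [eq_comm]

theorem coeff₂_tmulLeft_delta [IsLeftCancelMul S] (hω : IsWeight ω) (s x y : S)
    (m : A ⊗[ℂ] A) : B.coeff₂ (tmulLeft (B.delta s) m) (s * x, y) = B.coeff₂ m (x, y) := by
  induction m using TensorProduct.induction_on with
  | zero => simp
  | tmul a b => simp [tmulLeft, B.coeff_delta_mul_mul hω]
  | add m₁ m₂ h₁ h₂ => simp [h₁, h₂]

theorem coeff₂_tmulRight_delta_eq_zero (hω : IsWeight ω) {s y : S} (hy : ∀ v, v * s ≠ y)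
    (m : A ⊗[ℂ] A) (x : S) : B.coeff₂ (tmulRight (B.delta s) m) (x, y) = 0 := by
  induction m using TensorProduct.induction_on with
  | zero => simp
  | tmul a b => simp [tmulRight, B.coeff_mul_delta_eq_zero hω hy]
  | add m₁ m₂ h₁ h₂ => simp [h₁, h₂]

end Coefficients

section LeftCancel

variable {S : Type*} [Semigroup S] [IsLeftCancelMul S] {ω : S → ℝ}
  {A : Type*} [NormedRing A] [NormedAlgebra ℂ A] (B : BeurlingStructure S ω A)

theorem weight_mul_norm_coeff_mul'_le_projNorm (hω : IsWeight ω) {s e : S} (hse : s * e = s)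
    (hs : ∀ t, t * s ≠ e) (m : A ⊗[ℂ] A) :
    ω s * ‖B.coeff (LinearMap.mul' ℂ A m) e‖ ≤
      projNorm A A (tmulLeft (B.delta s) m - tmulRight (B.delta s) m) := by
  set D := tmulLeft (B.delta s) m - tmulRight (B.delta s) m
  have hfiber (p : S × S) (hp : p.1 * p.2 = e) :
      ω s * ‖B.coeff₂ m p‖ ≤ ‖B.coeff₂ D (s * p.1, p.2)‖ * (ω (s * p.1) * ω p.2) := by
    have hp₂ (v : S) : v * s ≠ p.2 := fun hv => hs (p.1 * v) (by rw [mul_assoc, hv, hp])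
    have hD : B.coeff₂ D (s * p.1, p.2) = B.coeff₂ m p := by
      simp only [D, map_sub, Pi.sub_apply, B.coeff₂_tmulLeft_delta hω,
        B.coeff₂_tmulRight_delta_eq_zero hω hp₂, sub_zero]
    have hω_s : ω s ≤ ω (s * p.1) * ω p.2 := by
      simpa only [mul_assoc, hp, hse] using hω.2 (s * p.1) p.2
    rw [hD, mul_comm]
    exact mul_le_mul_of_nonneg_left hω_s (norm_nonneg _)
  have hinj : Function.Injective fun p : S × S => (s * p.1, p.2) :=
    fun p q h => Prod.ext (mul_left_cancel (Prod.ext_iff.mp h).1) (Prod.ext_iff.mp h).2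
  calc ω s * ‖B.coeff (LinearMap.mul' ℂ A m) e‖
      ≤ ω s * ∑' p : S × S, ‖if p.1 * p.2 = e then B.coeff₂ m p else 0‖ := by
        rw [B.coeff_mul'_eq_tsum hω]
        gcongr
        · exact (hω.1 s).le
        · exact norm_tsum_le_tsum_norm (B.summable_coeff₂_fiber hω m e).norm
    _ = ∑' p : S × S, ω s * ‖if p.1 * p.2 = e then B.coeff₂ m p else 0‖ := tsum_mul_left.symm
    _ ≤ ∑' q : S × S, ‖B.coeff₂ D q‖ * (ω q.1 * ω q.2) := by
        refine (B.summable_coeff₂_fiber hω m e).norm.mul_left (ω s) |>.tsum_le_tsum_of_inj _ hinj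
          (fun q _ => mul_nonneg (norm_nonneg _) (mul_pos (hω.1 _) (hω.1 _)).le) (fun p => ?_)
          (B.summable_norm_coeff₂_mul hω D)
        split_ifs with hp
        · exact hfiber p hp
        · rw [norm_zero, mul_zero]
          exact mul_nonneg (norm_nonneg _) (mul_pos (hω.1 _) (hω.1 _)).le
    _ ≤ projNorm A A D := B.tsum_norm_coeff₂_mul_le_projNorm hω D

variable {ι : Type*} {l : Filter ι} {u : ι → A}

theorem exists_identity_of_tendsto_mul [Nonempty S] [l.NeBot] (hω : IsWeight ω)
    (hu : ∀ a, Tendsto (fun i => a * u i) l (𝓝 a)) :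
    ∃ e : S, (∀ s, e * s = s ∧ s * e = s) ∧ Tendsto (fun i => B.coeff (u i) e) l (𝓝 1) := by
  obtain ⟨s₀⟩ := ‹Nonempty S›
  obtain ⟨e, hs₀e⟩ := B.exists_mul_eq_self_of_tendsto_mul hω hu s₀
  have he : Tendsto (fun i => B.coeff (u i) e) l (𝓝 1) := by
    simpa using B.tendsto_coeff_of_tendsto_mul hω hu hs₀e e
  have hright (s : S) : s * e = s := by
    obtain ⟨e', hse'⟩ := B.exists_mul_eq_self_of_tendsto_mul hω hu s
    have h := tendsto_nhds_unique he (B.tendsto_coeff_of_tendsto_mul hω hu hse' e)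
    split_ifs at h with hee'
    · rwa [hee']
    · exact absurd h one_ne_zero
  refine ⟨e, fun s => ⟨mul_left_cancel (a := s₀) ?_, hright s⟩, he⟩
  rw [← mul_assoc, hright]

theorem exists_mul_eq_of_approxDiagonal [l.NeBot] (hω : IsWeight ω) {m : ι → A ⊗[ℂ] A} {s e : S}
    (hse : s * e = s)
    (hm : Tendsto (fun i => projNorm A A (tmulLeft (B.delta s) (m i) - tmulRight (B.delta s) (m i)))
      l (𝓝 0))
    (he : Tendsto (fun i => B.coeff (LinearMap.mul' ℂ A (m i)) e) l (𝓝 1)) :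
    ∃ t, t * s = e := by
  by_contra! hs
  have h := le_of_tendsto_of_tendsto' (he.norm.const_mul (ω s)) hm
    fun i => B.weight_mul_norm_coeff_mul'_le_projNorm hω hse hs (m i)
  rw [norm_one, mul_one] at h
  exact (hω.1 s).not_ge h

end LeftCancel

end BeurlingStructure

open BeurlingStructure

theorem stmt17_general (S : Type) [Semigroup S] [Nonempty S]
    (hcanc : ∀ a b c : S, a * b = a * c → b = c)
    (ω : S → ℝ) (hω : IsWeight ω)
    (A : Type) [NormedRing A] [NormedAlgebra ℂ A]
    (B : BeurlingStructure S ω A) (h : IsPseudoAmenable A) :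
    ∃ e : S, (∀ s : S, e * s = s ∧ s * e = s) ∧
      ∀ s : S, ∃ t : S, s * t = e ∧ t * s = e := by
  obtain ⟨ι, l, hl, m, hdiag, happrox⟩ := h
  have : IsLeftCancelMul S := ⟨hcanc⟩
  obtain ⟨e, he, hlim⟩ := B.exists_identity_of_tendsto_mul hω happrox
  refine ⟨e, he, fun s => ?_⟩
  obtain ⟨t, hts⟩ := B.exists_mul_eq_of_approxDiagonal hω (he s).2 (hdiag (B.delta s)) hlim
  refine ⟨t, mul_left_cancel (a := t) ?_, hts⟩
  rw [← mul_assoc, hts, (he t).1, (he t).2]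

/-- If `S` is a left cancellative semigroup with weight `ω` and
`ℓ¹(S,ω)` is pseudo-amenable, then `S` is a group. -/
theorem stmt17 (S : Type) [Semigroup S] [Nonempty S]
    (hcanc : ∀ a b c : S, a * b = a * c → b = c)
    (ω : S → ℝ) (hω : IsWeight ω)
    (A : Type) [NormedRing A] [NormedAlgebra ℂ A] [CompleteSpace A]
    (B : BeurlingStructure S ω A) (h : IsPseudoAmenable A) :
    ∃ e : S, (∀ s : S, e * s = s ∧ s * e = s) ∧
      ∀ s : S, ∃ t : S, s * t = e ∧ t * s = e :=
  stmt17_general S hcanc ω hω A B h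
end
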